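/- arXiv:2002.10628 — 2 statements merged into one kernel-verified Lean document; each statement's English description precedes it below -/
import Mathlib

section
/- Let Ω ⊂ ℝᵈ be a bounded domain. Suppose (u,w) is a subsolution pair on Ω̄ (continuous, with u ≥ 0, w ≥ 0, u ≥ ½w, w ≥ ½u, Δu ≥ 𝟙_{u>½w}, Δw ≥ 𝟙_{w>½u}) and (u',w') is a supersolution pair (continuous, with u' ≥ 0, w' ≥ 0, u' ≥ ½w', w' ≥ ½u', Δu' ≤ 1, Δw' ≤ 1). If u ≤ u' and w ≤ w' on ∂Ω, then u ≤ u' and w ≤ w' in Ω. -/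
/-!
Both differences `u - u'` and `w - w'` attain their maxima on the compact set `closure Ω`;
suppose the larger one, say `M = max (u - u')`, is positive. It is attained inside `Ω`, and
wherever `u - u' = M` the bounds `w - w' ≤ M` and `w' ≤ 2 u'` give `w < 2 u`. On the open set
`U = Ω ∩ {w < 2 u}` we have `Δu ≥ 1 ≥ Δu'`, so `u - u'` is distributionally subharmonic there,
and the weak maximum principle produces a point of `∂U` where `u - u' = M`. That point lies in
`Ω` (since `u ≤ u'` on `∂Ω`), hence in `U`, which is absurd.

The weak maximum principle for continuous distributionally subharmonic functions is reduced to
the smooth case by mollification; the smooth case follows from the second derivative test after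
adding `δ ‖x‖²`. In dimension `0` the space is a point, every test function has zero Laplacian,
and the subsolution inequalities force `u = w = 0`.
-/

open MeasureTheory Metric

noncomputable def lap {d : ℕ} (f : EuclideanSpace ℝ (Fin d) → ℝ) (x : EuclideanSpace ℝ (Fin d)) : ℝ :=
  ∑ i : Fin d, fderiv ℝ (fun y => fderiv ℝ f y (EuclideanSpace.single i 1)) x (EuclideanSpace.single i 1)

/-- `Δu ≥ f` on `Ω` in the distributional sense. -/
def DistribLapGEOn {d : ℕ} (u f : EuclideanSpace ℝ (Fin d) → ℝ)
    (Ω : Set (EuclideanSpace ℝ (Fin d))) : Prop :=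
  ∀ φ : EuclideanSpace ℝ (Fin d) → ℝ, ContDiff ℝ (⊤ : ℕ∞) φ → HasCompactSupport φ →
    tsupport φ ⊆ Ω → (∀ x, 0 ≤ φ x) → ∫ x, f x * φ x ≤ ∫ x, u x * lap φ x

/-- `Δu ≤ f` on `Ω` in the distributional sense. -/
def DistribLapLEOn {d : ℕ} (u f : EuclideanSpace ℝ (Fin d) → ℝ)
    (Ω : Set (EuclideanSpace ℝ (Fin d))) : Prop :=
  ∀ φ : EuclideanSpace ℝ (Fin d) → ℝ, ContDiff ℝ (⊤ : ℕ∞) φ → HasCompactSupport φ →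
    tsupport φ ⊆ Ω → (∀ x, 0 ≤ φ x) → ∫ x, u x * lap φ x ≤ ∫ x, f x * φ x

/-- The pointwise constraints `u ≥ 0`, `w ≥ 0`, `u ≥ ½w`, `w ≥ ½u` on `Ω`. -/
def PairConstraint {d : ℕ} (u w : EuclideanSpace ℝ (Fin d) → ℝ)
    (Ω : Set (EuclideanSpace ℝ (Fin d))) : Prop :=
  ∀ x ∈ Ω, 0 ≤ u x ∧ 0 ≤ w x ∧ w x / 2 ≤ u x ∧ u x / 2 ≤ w x

/-- Subsolution pair for the system of obstacle problems. -/
def SubPair {d : ℕ} (u w : EuclideanSpace ℝ (Fin d) → ℝ)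
    (Ω : Set (EuclideanSpace ℝ (Fin d))) : Prop :=
  PairConstraint u w Ω ∧
  DistribLapGEOn u (fun x => if w x / 2 < u x then 1 else 0) Ω ∧
  DistribLapGEOn w (fun x => if u x / 2 < w x then 1 else 0) Ω

/-- Supersolution pair for the system of obstacle problems. -/
def SuperPair {d : ℕ} (u w : EuclideanSpace ℝ (Fin d) → ℝ)
    (Ω : Set (EuclideanSpace ℝ (Fin d))) : Prop :=
  PairConstraint u w Ω ∧
  DistribLapLEOn u (fun _ => 1) Ω ∧ DistribLapLEOn w (fun _ => 1) Ω

/-- Solution pair: both a subsolution and a supersolution pair. -/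
def SolPair {d : ℕ} (u w : EuclideanSpace ℝ (Fin d) → ℝ)
    (Ω : Set (EuclideanSpace ℝ (Fin d))) : Prop :=
  SubPair u w Ω ∧ SuperPair u w Ω

open Filter Set
open ContinuousLinearMap (lsmul)
open scoped ContDiff Convolution Topology

theorem ContDiff.fderiv_apply_const {E F : Type*} [NormedAddCommGroup E] [NormedSpace ℝ E]
    [NormedAddCommGroup F] [NormedSpace ℝ F] {f : E → F} {m n : WithTop ℕ∞}
    (hf : ContDiff ℝ n f) (hmn : m + 1 ≤ n) (v : E) : ContDiff ℝ m fun y => fderiv ℝ f y v :=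
  (hf.fderiv_right hmn).clm_apply contDiff_const

theorem deriv_deriv_nonpos_of_isLocalMax {f : ℝ → ℝ} {a : ℝ} (hf : ContinuousAt f a)
    (h : IsLocalMax f a) : deriv (deriv f) a ≤ 0 := by
  by_contra! hpos
  have hmin : IsLocalMin f a := isLocalMin_of_deriv_deriv_pos hpos h.deriv_eq_zero hf
  have hconst : f =ᶠ[𝓝 a] fun _ => f a := by
    filter_upwards [h, hmin] with x hx hx' using le_antisymm hx hx'
  have : deriv f =ᶠ[𝓝 a] fun _ => 0 := by
    filter_upwards [hconst.eventuallyEq_nhds] with x hx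
    rw [hx.deriv_eq, deriv_const]
  rw [this.deriv_eq, deriv_const] at hpos
  exact hpos.false

section LineRestriction

variable {E : Type*} [NormedAddCommGroup E] [NormedSpace ℝ E]

theorem deriv_comp_add_smul {f : E → ℝ} (hf : Differentiable ℝ f) (x v : E) :
    deriv (fun t : ℝ => f (x + t • v)) = fun t => fderiv ℝ f (x + t • v) v := by
  funext t
  have hline : HasDerivAt (fun t : ℝ => x + t • v) v t := by
    simpa using ((hasDerivAt_id t).smul_const v).const_add x
  exact ((hf _).hasFDerivAt.comp_hasDerivAt t hline).deriv

theorem fderiv_fderiv_apply_nonpos_of_isLocalMax {f : E → ℝ} (hf : ContDiff ℝ 2 f) {x : E}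
    (h : IsLocalMax f x) (v : E) : fderiv ℝ (fun y => fderiv ℝ f y v) x v ≤ 0 := by
  have hf' : ContDiff ℝ 1 fun y => fderiv ℝ f y v := hf.fderiv_apply_const (by norm_num) v
  have hline : Continuous fun t : ℝ => x + t • v := by fun_prop
  have hmax : IsLocalMax (fun t : ℝ => f (x + t • v)) 0 :=
    IsLocalMax.comp_continuous (g := fun t : ℝ => x + t • v) (by simpa using h)
      hline.continuousAt
  have := deriv_deriv_nonpos_of_isLocalMax (f := fun t => f (x + t • v))
    (hf.continuous.comp hline).continuousAt hmax
  rw [deriv_comp_add_smul (hf.differentiable two_ne_zero),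
    deriv_comp_add_smul (hf'.differentiable one_ne_zero)] at this
  simpa using this

end LineRestriction

theorem convolution_lsmul_comm {G : Type*} [AddCommGroup G] [MeasurableSpace G] [MeasurableAdd G]
    [MeasurableNeg G] {μ : Measure G} [μ.IsAddLeftInvariant] [μ.IsNegInvariant] (f g : G → ℝ) :
    f ⋆[lsmul ℝ ℝ, μ] g = g ⋆[lsmul ℝ ℝ, μ] f := by
  rw [← convolution_flip]
  congr 1
  ext
  simp

theorem fderiv_convolution_apply {G : Type*} [NormedAddCommGroup G] [NormedSpace ℝ G]
    [MeasurableSpace G] [BorelSpace G] {μ : Measure G} [SFinite μ] [μ.IsAddLeftInvariant]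
    {f g : G → ℝ} (hf : LocallyIntegrable f μ) (hg : ContDiff ℝ 1 g) (hcg : HasCompactSupport g)
    (x v : G) :
    fderiv ℝ (f ⋆[lsmul ℝ ℝ, μ] g) x v = (f ⋆[lsmul ℝ ℝ, μ] fun y => fderiv ℝ g y v) x := by
  rw [(hcg.hasFDerivAt_convolution_right _ hf hg x).fderiv]
  exact convolution_precompR_apply _ hf (hcg.fderiv ℝ) (hg.continuous_fderiv one_ne_zero) x v

section Laplacian

variable {d : ℕ}

theorem lap_add {f g : EuclideanSpace ℝ (Fin d) → ℝ} (hf : ContDiff ℝ 2 f) (hg : ContDiff ℝ 2 g)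
    (x : EuclideanSpace ℝ (Fin d)) : lap (fun y => f y + g y) x = lap f x + lap g x := by
  have hfg : ∀ y, fderiv ℝ (fun y => f y + g y) y = fderiv ℝ f y + fderiv ℝ g y := fun y =>
    fderiv_fun_add (hf.differentiable two_ne_zero y) (hg.differentiable two_ne_zero y)
  simp only [lap, hfg, add_apply, ← Finset.sum_add_distrib]
  refine Finset.sum_congr rfl fun i _ => ?_
  rw [fderiv_fun_add ((hf.fderiv_apply_const (by norm_num) _).differentiable one_ne_zero x)
    ((hg.fderiv_apply_const (by norm_num) _).differentiable one_ne_zero x)]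
  rfl

theorem lap_const_mul {f : EuclideanSpace ℝ (Fin d) → ℝ} (hf : ContDiff ℝ 2 f) (c : ℝ)
    (x : EuclideanSpace ℝ (Fin d)) : lap (fun y => c * f y) x = c * lap f x := by
  have hcf : ∀ y, fderiv ℝ (fun y => c * f y) y = c • fderiv ℝ f y := fun y =>
    fderiv_const_mul (hf.differentiable two_ne_zero y) c
  simp only [lap, hcf, smul_apply, smul_eq_mul, Finset.mul_sum]
  refine Finset.sum_congr rfl fun i _ => ?_
  rw [fderiv_const_mul ((hf.fderiv_apply_const (by norm_num) _).differentiable one_ne_zero x)]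
  rfl

theorem lap_norm_sq (x : EuclideanSpace ℝ (Fin d)) : lap (fun y => ‖y‖ ^ 2) x = 2 * d := by
  have h2 : ∀ v : EuclideanSpace ℝ (Fin d),
      HasFDerivAt (fun y => 2 * inner ℝ y v) ((2 : ℝ) • innerSL ℝ v) x := fun v => by
    simpa [real_inner_comm] using ((innerSL ℝ v).hasFDerivAt (x := x)).const_mul (2 : ℝ)
  simp [lap, (h2 _).fderiv, mul_comm]

theorem lap_nonpos_of_isLocalMax {f : EuclideanSpace ℝ (Fin d) → ℝ} (hf : ContDiff ℝ 2 f)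
    {x : EuclideanSpace ℝ (Fin d)} (h : IsLocalMax f x) : lap f x ≤ 0 :=
  Finset.sum_nonpos fun _ _ => fderiv_fderiv_apply_nonpos_of_isLocalMax hf h _

theorem lap_eq_zero_of_notMem_tsupport {f : EuclideanSpace ℝ (Fin d) → ℝ}
    {x : EuclideanSpace ℝ (Fin d)} (hx : x ∉ tsupport f) : lap f x = 0 := by
  have hf : f =ᶠ[𝓝 x] 0 := notMem_tsupport_iff_eventuallyEq.mp hx
  have h : ∀ v : EuclideanSpace ℝ (Fin d), (fun y => fderiv ℝ f y v) =ᶠ[𝓝 x] 0 := fun v => by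
    filter_upwards [hf.fderiv (𝕜 := ℝ)] with y hy
    simp [hy]
  simp [lap, (h _).fderiv_eq]

theorem continuous_lap {f : EuclideanSpace ℝ (Fin d) → ℝ} (hf : ContDiff ℝ 2 f) :
    Continuous (lap f) :=
  continuous_finsetSum _ fun _ _ =>
    ((hf.fderiv_apply_const (m := 1) (by norm_num) _).fderiv_apply_const (m := 0) le_rfl
      _).continuous

theorem lap_comp_const_sub (f : EuclideanSpace ℝ (Fin d) → ℝ) (x y : EuclideanSpace ℝ (Fin d)) :
    lap (fun z => f (x - z)) y = lap f (x - y) := by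
  have hrefl : ∀ (g : EuclideanSpace ℝ (Fin d) → ℝ) z,
      fderiv ℝ (fun z => g (x - z)) z = -fderiv ℝ g (x - z) := fun g z => by
    simpa [fderiv_comp_add_left, ← sub_eq_add_neg] using
      fderiv_comp_smul (f := fun w => g (x + w)) (x := z) (-1 : ℝ)
  refine Finset.sum_congr rfl fun i _ => ?_
  have h1 : (fun z => fderiv ℝ (fun z => f (x - z)) z (EuclideanSpace.single i 1)) =
      fun z => -(fun w => fderiv ℝ f w (EuclideanSpace.single i 1)) (x - z) := by
    funext z; rw [hrefl]; rfl
  rw [h1, fderiv_fun_neg, hrefl (fun w => fderiv ℝ f w (EuclideanSpace.single i 1))]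
  simp

theorem lap_convolution {V ρ : EuclideanSpace ℝ (Fin d) → ℝ} (hV : LocallyIntegrable V)
    (hρ : ContDiff ℝ 2 ρ) (hcρ : HasCompactSupport ρ) (x : EuclideanSpace ℝ (Fin d)) :
    lap (V ⋆[lsmul ℝ ℝ] ρ) x = ∫ y, V y * lap ρ (x - y) := by
  have hterm : ∀ v : EuclideanSpace ℝ (Fin d),
      fderiv ℝ (fun y => fderiv ℝ (V ⋆[lsmul ℝ ℝ] ρ) y v) x v =
        ∫ y, V y * fderiv ℝ (fun z => fderiv ℝ ρ z v) (x - y) v := fun v => by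
    have hρ₁ : ContDiff ℝ 1 fun z => fderiv ℝ ρ z v := hρ.fderiv_apply_const (by norm_num) v
    have h₁ : (fun y => fderiv ℝ (V ⋆[lsmul ℝ ℝ] ρ) y v) =
        V ⋆[lsmul ℝ ℝ] fun z => fderiv ℝ ρ z v :=
      funext fun y => fderiv_convolution_apply hV (hρ.of_le (by norm_num)) hcρ y v
    rw [h₁, fderiv_convolution_apply hV hρ₁ (hcρ.fderiv_apply (𝕜 := ℝ) v), convolution_def]
    rfl
  have hint : ∀ v : EuclideanSpace ℝ (Fin d),
      Integrable fun y => V y * fderiv ℝ (fun z => fderiv ℝ ρ z v) (x - y) v := fun v => by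
    simpa [ConvolutionExistsAt] using
      ((hcρ.fderiv_apply (𝕜 := ℝ) v).fderiv_apply (𝕜 := ℝ) v).convolutionExists_right
        (lsmul ℝ ℝ) hV
        ((hρ.fderiv_apply_const (by norm_num) v).fderiv_apply_const (m := 0) le_rfl v).continuous x
  simp only [lap, hterm, Finset.mul_sum]
  exact (integral_finsetSum _ fun i _ => hint _).symm

end Laplacian

section Distributional

variable {d : ℕ} {Ω U : Set (EuclideanSpace ℝ (Fin d))} {u v f g : EuclideanSpace ℝ (Fin d) → ℝ}

theorem DistribLapGEOn.congr (h : DistribLapGEOn u f Ω) (huv : EqOn u v Ω) :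
    DistribLapGEOn v f Ω := by
  intro φ hφ hcφ hφΩ hφ₀
  convert h φ hφ hcφ hφΩ hφ₀ using 3 with y
  by_cases hy : y ∈ tsupport φ
  · rw [huv (hφΩ hy)]
  · rw [lap_eq_zero_of_notMem_tsupport hy, mul_zero, mul_zero]

theorem ContinuousOn.integrable_mul_lap (hu : ContinuousOn u Ω) {φ : EuclideanSpace ℝ (Fin d) → ℝ}
    (hφ : ContDiff ℝ 2 φ) (hcφ : HasCompactSupport φ) (hφΩ : tsupport φ ⊆ Ω) :
    Integrable fun y => u y * lap φ y :=
  ((hu.mono hφΩ).mul (continuous_lap hφ).continuousOn).integrableOn_compact hcφ.isCompact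
    |>.integrable_of_forall_notMem_eq_zero fun _ hy => by
      rw [Pi.mul_apply, lap_eq_zero_of_notMem_tsupport hy, mul_zero]

theorem DistribLapGEOn.sub (hu : ContinuousOn u U) (hv : ContinuousOn v U)
    (hf : DistribLapGEOn u f Ω) (hg : DistribLapLEOn v g Ω) (hUΩ : U ⊆ Ω) (hfg : EqOn f g U) :
    DistribLapGEOn (u - v) 0 U := by
  intro φ hφ hcφ hφU hφ₀
  have hφ₂ : ContDiff ℝ 2 φ := hφ.of_le (by norm_cast)
  have hfφ : ∫ y, f y * φ y = ∫ y, g y * φ y := by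
    congr 1 with y
    by_cases hy : y ∈ tsupport φ
    · rw [hfg (hφU hy)]
    · rw [image_eq_zero_of_notMem_tsupport hy, mul_zero, mul_zero]
  have h₁ := hf φ hφ hcφ (hφU.trans hUΩ) hφ₀
  have h₂ := hg φ hφ hcφ (hφU.trans hUΩ) hφ₀
  simp only [Pi.zero_apply, zero_mul, integral_zero, Pi.sub_apply, sub_mul]
  rw [integral_sub (hu.integrable_mul_lap hφ₂ hcφ hφU) (hv.integrable_mul_lap hφ₂ hcφ hφU)]
  linarith

theorem DistribLapGEOn.apply_nonpos_of_dim_zero {u f : EuclideanSpace ℝ (Fin 0) → ℝ}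
    {Ω : Set (EuclideanSpace ℝ (Fin 0))} (h : DistribLapGEOn u f Ω) {x : EuclideanSpace ℝ (Fin 0)}
    (hx : x ∈ Ω) : f x ≤ 0 := by
  have hpt : ∀ y : EuclideanSpace ℝ (Fin 0), y = x := fun y => Subsingleton.elim y x
  have hvol : 0 < volume.real (univ : Set (EuclideanSpace ℝ (Fin 0))) :=
    ENNReal.toReal_pos (isOpen_univ.measure_pos volume ⟨x, trivial⟩).ne'
      isCompact_univ.measure_lt_top.ne
  have := h (fun _ => 1) contDiff_const (isCompact_univ.of_isClosed_subset (isClosed_tsupport _)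
    (subset_univ _)) (fun y _ => hpt y ▸ hx) (fun _ => zero_le_one)
  simp only [lap, Finset.univ_eq_empty, Finset.sum_empty, mul_zero, integral_zero, mul_one,
    hpt _, integral_const, smul_eq_mul] at this
  by_contra! hfx
  exact this.not_gt (mul_pos hvol hfx)

theorem SubPair.eq_zero_of_dim_zero {u w : EuclideanSpace ℝ (Fin 0) → ℝ}
    {Ω : Set (EuclideanSpace ℝ (Fin 0))} (h : SubPair u w Ω) {x : EuclideanSpace ℝ (Fin 0)}
    (hx : x ∈ Ω) : u x = 0 ∧ w x = 0 := by
  obtain ⟨hcon, hlapu, hlapw⟩ := h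
  have hu : ¬w x / 2 < u x := fun h => by
    simpa [h] using (hlapu.apply_nonpos_of_dim_zero hx).not_gt
  have hw : ¬u x / 2 < w x := fun h => by
    simpa [h] using (hlapw.apply_nonpos_of_dim_zero hx).not_gt
  obtain ⟨hu₀, hw₀, -, -⟩ := hcon x hx
  constructor <;> linarith [not_lt.1 hu, not_lt.1 hw]

end Distributional

section MaximumPrinciple

variable {d : ℕ} {U : Set (EuclideanSpace ℝ (Fin d))} {V : EuclideanSpace ℝ (Fin d) → ℝ}

theorem le_of_forall_frontier_le_of_lap_pos (hU : IsOpen U) (hUb : Bornology.IsBounded U)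
    {g : EuclideanSpace ℝ (Fin d) → ℝ} (hg : ContDiff ℝ 2 g) (hlap : ∀ x ∈ U, 0 < lap g x)
    {m : ℝ} (hm : ∀ y ∈ frontier U, g y ≤ m) {x : EuclideanSpace ℝ (Fin d)} (hx : x ∈ U) :
    g x ≤ m := by
  obtain ⟨z, hz, hzmax⟩ := hUb.isCompact_closure.exists_isMaxOn ⟨x, subset_closure hx⟩
    hg.continuous.continuousOn
  have hzU : z ∉ U := fun hzU => (hlap z hzU).not_ge <| lap_nonpos_of_isLocalMax hg <|
    hzmax.isLocalMax (mem_of_superset (hU.mem_nhds hzU) subset_closure)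
  exact (hzmax (subset_closure hx)).trans (hm z (hU.frontier_eq ▸ ⟨hz, hzU⟩))

theorem le_of_forall_frontier_le_of_lap_nonneg (hd : 0 < d) (hU : IsOpen U)
    (hUb : Bornology.IsBounded U) {g : EuclideanSpace ℝ (Fin d) → ℝ} (hg : ContDiff ℝ 2 g)
    (hlap : ∀ x ∈ U, 0 ≤ lap g x) {m : ℝ} (hm : ∀ y ∈ frontier U, g y ≤ m)
    {x : EuclideanSpace ℝ (Fin d)} (hx : x ∈ U) : g x ≤ m := by
  obtain ⟨R, hR⟩ := hUb.subset_closedBall 0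
  have hnorm : ∀ y ∈ closure U, ‖y‖ ^ 2 ≤ R ^ 2 := fun y hy => by
    have hyR : ‖y‖ ≤ R := by simpa using closure_minimal hR isClosed_closedBall hy
    exact pow_le_pow_left₀ (norm_nonneg y) hyR 2
  refine le_of_forall_pos_le_add fun ε hε => ?_
  set δ := ε / (R ^ 2 + 1)
  have hδ : 0 < δ := by positivity
  have hδR : δ * R ^ 2 ≤ ε := by
    rw [div_mul_eq_mul_div, div_le_iff₀ (by positivity)]
    nlinarith
  have hq : ContDiff ℝ 2 fun y : EuclideanSpace ℝ (Fin d) => δ * ‖y‖ ^ 2 :=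
    contDiff_const.mul (contDiff_norm_sq ℝ)
  have hpert := le_of_forall_frontier_le_of_lap_pos hU hUb (hg.add hq) (m := m + δ * R ^ 2)
    (fun y hy => by
      rw [lap_add hg hq, lap_const_mul (contDiff_norm_sq ℝ), lap_norm_sq]
      have : (0 : ℝ) < d := by exact_mod_cast hd
      nlinarith [hlap y hy])
    (fun y hy => by
      have := hnorm y (frontier_subset_closure hy)
      nlinarith [hm y hy])
    hx
  nlinarith [sq_nonneg ‖x‖]

theorem lap_convolution_bump_nonneg (hV : Continuous V) (hsub : DistribLapGEOn V 0 U)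
    (φ : ContDiffBump (0 : EuclideanSpace ℝ (Fin d))) {x : EuclideanSpace ℝ (Fin d)}
    (hx : closedBall x φ.rOut ⊆ U) :
    0 ≤ lap (V ⋆[lsmul ℝ ℝ] φ.normed volume) x := by
  have hsupp : tsupport (fun z => φ.normed volume (x - z)) ⊆ U := by
    refine (closure_minimal (fun z hz => ?_) isClosed_closedBall).trans hx
    have : x - z ∈ ball 0 φ.rOut := φ.support_normed_eq (μ := volume) ▸ hz
    exact ball_subset_closedBall (by simpa [dist_eq_norm, norm_sub_rev] using this)
  have := hsub (fun z => φ.normed volume (x - z))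
    (φ.contDiff_normed.comp (contDiff_const.sub contDiff_id))
    (φ.hasCompactSupport_normed.comp_homeomorph (Homeomorph.subLeft x)) hsupp
    (fun z => φ.nonneg_normed _)
  rw [lap_convolution hV.locallyIntegrable (φ.contDiff_normed (n := 2))
    φ.hasCompactSupport_normed]
  simpa [lap_comp_const_sub] using this

theorem dist_convolution_bump_le (hV : Continuous V)
    (φ : ContDiffBump (0 : EuclideanSpace ℝ (Fin d))) {x : EuclideanSpace ℝ (Fin d)} {η : ℝ}
    (hη : ∀ y ∈ ball x φ.rOut, dist (V y) (V x) ≤ η) :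
    dist ((V ⋆[lsmul ℝ ℝ] φ.normed volume) x) (V x) ≤ η := by
  rw [convolution_lsmul_comm]
  exact φ.dist_normed_convolution_le hV.aestronglyMeasurable hη

theorem le_of_forall_frontier_le_of_distribLapGEOn (hd : 0 < d) (hU : IsOpen U)
    (hUb : Bornology.IsBounded U) (hV : Continuous V) (hsub : DistribLapGEOn V 0 U)
    {m : ℝ} (hm : ∀ y ∈ frontier U, V y ≤ m) {x : EuclideanSpace ℝ (Fin d)} (hx : x ∈ U) :
    V x ≤ m := by
  have : Nonempty (Fin d) := ⟨⟨0, hd⟩⟩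
  have hUne : U ≠ univ := fun h => NormedSpace.unbounded_univ ℝ _ (h ▸ hUb)
  have hmem : ∀ y, y ∈ U ↔ 0 < infDist y Uᶜ := fun y => by
    rw [← hU.isClosed_compl.notMem_iff_infDist_pos (nonempty_compl.2 hUne), notMem_compl_iff]
  refine le_of_forall_pos_le_add fun η hη => ?_
  obtain ⟨δ, hδ, hVδ⟩ := Metric.uniformContinuousOn_iff.mp
    (hUb.isCompact_closure.uniformContinuousOn_of_continuous hV.continuousOn) (η / 3)
    (by positivity)
  set ε := min δ (infDist x Uᶜ) / 2
  have hε : 0 < ε := half_pos (lt_min hδ ((hmem x).1 hx))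
  have hεδ : ε < δ := (half_lt_self (lt_min hδ ((hmem x).1 hx))).trans_le (min_le_left _ _)
  have hεx : ε < infDist x Uᶜ :=
    (half_lt_self (lt_min hδ ((hmem x).1 hx))).trans_le (min_le_right _ _)
  let φ : ContDiffBump (0 : EuclideanSpace ℝ (Fin d)) := ⟨ε / 2, ε, half_pos hε, half_lt_self hε⟩
  set W := V ⋆[lsmul ℝ ℝ] φ.normed volume
  have hWV : ∀ y, ε ≤ infDist y Uᶜ → dist (W y) (V y) ≤ η / 3 := fun y hy => by
    have hball : ball y ε ⊆ U := (ball_subset_ball hy).trans ball_infDist_compl_subset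
    refine dist_convolution_bump_le hV φ fun z hz => (hVδ z (subset_closure (hball hz)) y
      (subset_closure (hball (mem_ball_self hε))) ((mem_ball.1 hz).trans hεδ)).le
  set R := {y | ε < infDist y Uᶜ}
  have hRU : R ⊆ U := fun y hy => (hmem y).2 (hε.trans hy)
  -- a point of `∂R` is at distance `ε` from `Uᶜ`, hence from some point `p ∈ ∂U`
  have hWR : ∀ y ∈ frontier R, W y ≤ m + 2 * (η / 3) := fun y hy => by
    have hyε : ε = infDist y Uᶜ := frontier_lt_subset_eq continuous_const
      (continuous_infDist_pt _) hy
    obtain ⟨p, hp, hyp⟩ :=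
      exists_mem_frontier_infDist_compl_eq_dist ((hmem y).2 (hyε ▸ hε)) hUne
    have hVp : dist (V y) (V p) < η / 3 := hVδ y (subset_closure ((hmem y).2 (hyε ▸ hε))) p
      (frontier_subset_closure hp) (by rwa [← hyp, ← hyε])
    linarith [(abs_le.1 (hWV y hyε.le)).2, (abs_lt.1 hVp).2, hm p hp]
  have hWx := le_of_forall_frontier_le_of_lap_nonneg hd
    (isOpen_lt continuous_const (continuous_infDist_pt _)) (hUb.subset hRU)
    (φ.hasCompactSupport_normed.contDiff_convolution_right _ hV.locallyIntegrable
      (φ.contDiff_normed (n := 2)))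
    (fun y hy => lap_convolution_bump_nonneg hV hsub φ
      ((closedBall_subset_ball hy).trans ball_infDist_compl_subset)) hWR hεx
  linarith [(abs_le.1 (hWV x hεx.le)).1]

theorem exists_mem_frontier_le_of_distribLapGEOn (hd : 0 < d) (hU : IsOpen U)
    (hUb : Bornology.IsBounded U) (hV : ContinuousOn V (closure U))
    (hsub : DistribLapGEOn V 0 U) {x : EuclideanSpace ℝ (Fin d)} (hx : x ∈ U) :
    ∃ y ∈ frontier U, V x ≤ V y := by
  have : Nonempty (Fin d) := ⟨⟨0, hd⟩⟩
  obtain ⟨W, hW⟩ := ContinuousMap.exists_restrict_eq isClosed_closure ⟨_, hV.domRestrict⟩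
  have hWV : EqOn W V (closure U) := fun y hy => DFunLike.congr_fun hW ⟨y, hy⟩
  have hfr : (frontier U).Nonempty :=
    nonempty_frontier_iff.2 ⟨⟨x, hx⟩, fun h => NormedSpace.unbounded_univ ℝ _ (h ▸ hUb)⟩
  obtain ⟨y, hy, hymax⟩ := (hUb.isCompact_closure.of_isClosed_subset isClosed_frontier
    frontier_subset_closure).exists_isMaxOn hfr W.continuous.continuousOn
  refine ⟨y, hy, ?_⟩
  rw [← hWV (subset_closure hx), ← hWV (frontier_subset_closure hy)]
  exact le_of_forall_frontier_le_of_distribLapGEOn hd hU hUb W.continuous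
    (hsub.congr fun z hz => (hWV (subset_closure hz)).symm) hymax hx

end MaximumPrinciple

theorem sub_nonpos_of_isMaxOn_of_le {d : ℕ} (hd : 0 < d)
    {Ω : Set (EuclideanSpace ℝ (Fin d))} (hΩ : IsOpen Ω) (hbdd : Bornology.IsBounded Ω)
    {u w u' w' : EuclideanSpace ℝ (Fin d) → ℝ} (hu : ContinuousOn u (closure Ω))
    (hw : ContinuousOn w (closure Ω)) (hu' : ContinuousOn u' (closure Ω))
    (hlapu : DistribLapGEOn u (fun x => if w x / 2 < u x then 1 else 0) Ω)
    (hlapu' : DistribLapLEOn u' (fun _ => 1) Ω) (hcon' : ∀ x ∈ Ω, w' x / 2 ≤ u' x)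
    (hbdry : ∀ x ∈ frontier Ω, u x ≤ u' x) {z : EuclideanSpace ℝ (Fin d)} (hz : z ∈ closure Ω)
    (hzmax : IsMaxOn (u - u') (closure Ω) z) (hwz : ∀ y ∈ Ω, w y - w' y ≤ u z - u' z) :
    u z - u' z ≤ 0 := by
  by_contra! hM
  have hmemΩ : ∀ y ∈ closure Ω, 0 < u y - u' y → y ∈ Ω := fun y hy hpos =>
    ((closure_eq_self_union_frontier Ω ▸ hy).resolve_right fun hfr =>
      (sub_nonpos.2 (hbdry y hfr)).not_gt hpos)
  have hstrict : ∀ y ∈ Ω, u y - u' y = u z - u' z → w y / 2 < u y := fun y hy hyz => by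
    linarith [hwz y hy, hcon' y hy]
  set U := Ω ∩ {y | w y / 2 < u y}
  have hUΩ : U ⊆ Ω := inter_subset_left
  have hU : IsOpen U := by
    have := ((hw.mono subset_closure).div_const 2).sub (hu.mono subset_closure)
      |>.isOpen_inter_preimage hΩ (isOpen_Iio (a := (0 : ℝ)))
    convert this using 2
    ext y
    simp [sub_neg]
  have hzΩ : z ∈ Ω := hmemΩ z hz hM
  have hsubU : DistribLapGEOn (u - u') 0 U :=
    hlapu.sub (hu.mono (hUΩ.trans subset_closure)) (hu'.mono (hUΩ.trans subset_closure)) hlapu'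
      hUΩ fun y hy => if_pos hy.2
  obtain ⟨y, hyU, hzy⟩ := exists_mem_frontier_le_of_distribLapGEOn hd hU (hbdd.subset hUΩ)
    ((hu.sub hu').mono (closure_mono hUΩ)) hsubU ⟨hzΩ, hstrict z hzΩ rfl⟩
  have hyΩ' : y ∈ closure Ω := closure_mono hUΩ (frontier_subset_closure hyU)
  have hyz : u y - u' y = u z - u' z := le_antisymm (hzmax hyΩ') hzy
  have hyΩ : y ∈ Ω := hmemΩ y hyΩ' (hyz ▸ hM)
  exact (hU.frontier_eq ▸ hyU).2 ⟨hyΩ, hstrict y hyΩ hyz⟩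

theorem stmt3_general (d : ℕ) (Ω : Set (EuclideanSpace ℝ (Fin d)))
    (hΩ : IsOpen Ω) (hbdd : Bornology.IsBounded Ω)
    (u w u' w' : EuclideanSpace ℝ (Fin d) → ℝ)
    (hu : ContinuousOn u (closure Ω)) (hw : ContinuousOn w (closure Ω))
    (hu' : ContinuousOn u' (closure Ω)) (hw' : ContinuousOn w' (closure Ω))
    (hsub : SubPair u w Ω) (hsup : SuperPair u' w' Ω)
    (hbdry : ∀ x ∈ frontier Ω, u x ≤ u' x ∧ w x ≤ w' x) :
    ∀ x ∈ Ω, u x ≤ u' x ∧ w x ≤ w' x := by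
  intro x hx
  rcases Nat.eq_zero_or_pos d with rfl | hd
  · obtain ⟨hu₀, hw₀⟩ := hsub.eq_zero_of_dim_zero hx
    obtain ⟨hu'₀, hw'₀, -, -⟩ := hsup.1 x hx
    exact ⟨hu₀ ▸ hu'₀, hw₀ ▸ hw'₀⟩
  obtain ⟨-, hlapu, hlapw⟩ := hsub
  obtain ⟨hcon', hlapu', hlapw'⟩ := hsup
  obtain ⟨z₁, hz₁, hmax₁⟩ :=
    hbdd.isCompact_closure.exists_isMaxOn ⟨x, subset_closure hx⟩ (hu.sub hu')
  obtain ⟨z₂, hz₂, hmax₂⟩ :=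
    hbdd.isCompact_closure.exists_isMaxOn ⟨x, subset_closure hx⟩ (hw.sub hw')
  have hnonpos : u z₁ - u' z₁ ≤ 0 ∧ w z₂ - w' z₂ ≤ 0 := by
    rcases le_total (u z₁ - u' z₁) (w z₂ - w' z₂) with h | h
    · have h₂ := sub_nonpos_of_isMaxOn_of_le hd hΩ hbdd hw hu hw' hlapw hlapw'
        (fun y hy => (hcon' y hy).2.2.2) (fun y hy => (hbdry y hy).2) hz₂ hmax₂
        (fun y hy => (hmax₁ (subset_closure hy)).trans h)
      exact ⟨h.trans h₂, h₂⟩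
    · have h₁ := sub_nonpos_of_isMaxOn_of_le hd hΩ hbdd hu hw hu' hlapu hlapu'
        (fun y hy => (hcon' y hy).2.2.1) (fun y hy => (hbdry y hy).1) hz₁ hmax₁
        (fun y hy => (hmax₂ (subset_closure hy)).trans h)
      exact ⟨h₁, h.trans h₁⟩
  have h₁ : u x - u' x ≤ u z₁ - u' z₁ := hmax₁ (subset_closure hx)
  have h₂ : w x - w' x ≤ w z₂ - w' z₂ := hmax₂ (subset_closure hx)
  constructor <;> linarith

/-- Comparison principle between a subsolution pair and a supersolution pair on a
bounded domain. -/
theorem stmt3 (d : ℕ) (Ω : Set (EuclideanSpace ℝ (Fin d)))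
    (hΩ : IsOpen Ω) (hconn : IsConnected Ω) (hbdd : Bornology.IsBounded Ω)
    (u w u' w' : EuclideanSpace ℝ (Fin d) → ℝ)
    (hu : ContinuousOn u (closure Ω)) (hw : ContinuousOn w (closure Ω))
    (hu' : ContinuousOn u' (closure Ω)) (hw' : ContinuousOn w' (closure Ω))
    (hsub : SubPair u w Ω) (hsup : SuperPair u' w' Ω)
    (hbdry : ∀ x ∈ frontier Ω, u x ≤ u' x ∧ w x ≤ w' x) :
    ∀ x ∈ Ω, u x ≤ u' x ∧ w x ≤ w' x :=
  stmt3_general d Ω hΩ hbdd u w u' w' hu hw hu' hw' hsub hsup hbdry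
end

section
/- Let u be twice differentiable on an open set Ω ⊂ ℝᵈ, u ≥ 0, Δu = 1 on {u > 0}, and let x₀ ∈ Ω with u(x₀) > 0. Then for every ρ > 0 with B_ρ(x₀) ⊂ Ω, sup_{∂B_ρ(x₀)} u ≥ u(x₀) + ρ²/(4d). -/
open Metric

/-!
With `c = 1 / (4d)`, the function `v y = u y - c ‖y - x₀‖²` has `Δv = 1 - 2cd > 0` on `{u > 0}`,
so it has no interior maximum there: a C² function has nonpositive second directional
derivatives at a local maximum. Its maximum over the closure of the component `U` of
`{u > 0} ∩ B_ρ(x₀)` containing `x₀` is therefore attained on `∂U`. At a point of `∂U` inside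
the ball `u` vanishes and `v ≤ 0 < u x₀ = v x₀`, so the maximum lies on `∂B_ρ(x₀)`, where
`v = u - c ρ²`.
-/

open Set Filter Topology
open scoped RealInnerProductSpace

theorem IsLocalMax.nonpos_of_hasDerivAt_of_hasDerivAt {g g' g'' : ℝ → ℝ} {t₀ : ℝ}
    (hmax : IsLocalMax g t₀) (hg : ∀ᶠ t in 𝓝 t₀, HasDerivAt g (g' t) t)
    (hg' : ∀ᶠ t in 𝓝 t₀, HasDerivAt g' (g'' t) t) (hg'' : ContinuousAt g'' t₀) :
    g'' t₀ ≤ 0 := by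
  by_contra! hpos
  obtain ⟨ε, hε, h⟩ := eventually_nhds_iff_ball.mp
    (hmax.and <| hg.and <| hg'.and <| hg''.eventually (lt_mem_nhds hpos))
  have hcrit : g' t₀ = 0 := hmax.hasDerivAt_eq_zero (h t₀ (mem_ball_self hε)).2.1
  have hball : Icc t₀ (t₀ + ε / 2) ⊆ ball t₀ ε := fun t ht => by
    rw [Real.ball_eq_Ioo]; constructor <;> linarith [ht.1, ht.2]
  have hmono_deriv : StrictMonoOn g' (Icc t₀ (t₀ + ε / 2)) :=
    strictMonoOn_of_hasDerivWithinAt_pos (convex_Icc _ _)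
      (fun t ht => (h t (hball ht)).2.2.1.continuousAt.continuousWithinAt)
      (fun t ht => (h t (hball (interior_subset ht))).2.2.1.hasDerivWithinAt)
      (fun t ht => (h t (hball (interior_subset ht))).2.2.2)
  have hmono : StrictMonoOn g (Icc t₀ (t₀ + ε / 2)) :=
    strictMonoOn_of_hasDerivWithinAt_pos (convex_Icc _ _)
      (fun t ht => (h t (hball ht)).2.1.continuousAt.continuousWithinAt)
      (fun t ht => (h t (hball (interior_subset ht))).2.1.hasDerivWithinAt)
      (fun t ht => by
        rw [interior_Icc] at ht
        rw [← hcrit]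
        exact hmono_deriv (left_mem_Icc.mpr (by linarith)) (Ioo_subset_Icc_self ht) ht.1)
  have hright : t₀ + ε / 2 ∈ Icc t₀ (t₀ + ε / 2) := right_mem_Icc.mpr (by linarith)
  exact (hmono (left_mem_Icc.mpr (by linarith)) hright (by linarith)).not_ge
    (h _ (hball hright)).1

theorem IsLocalMax.fderiv_fderiv_apply_self_nonpos {E : Type*} [NormedAddCommGroup E]
    [NormedSpace ℝ E] {f : E → ℝ} {z : E} (hmax : IsLocalMax f z) (hf : ContDiffAt ℝ 2 f z)
    (e : E) : fderiv ℝ (fun y => fderiv ℝ f y e) z e ≤ 0 := by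
  set w : E → ℝ := fun y => fderiv ℝ f y e
  set L : ℝ → E := fun t => z + t • e
  have hL : ∀ t, HasDerivAt L e t := fun t => by
    convert ((hasDerivAt_id t).smul_const e).const_add z using 1 <;> simp [L]
  have hLcont : Continuous L := by fun_prop
  have hL0 : L 0 = z := by simp [L]
  have hw : ∀ y, ContDiffAt ℝ 2 f y → ContDiffAt ℝ 1 w y := fun y hy =>
    (ContinuousLinearMap.apply ℝ ℝ e).contDiff.contDiffAt.comp y (hy.fderiv_right le_rfl)
  have hnear : ∀ᶠ t in 𝓝 0, ContDiffAt ℝ 2 f (L t) :=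
    (hLcont.tendsto' 0 z hL0).eventually (hf.eventually (by simp))
  have hmaxL : IsLocalMax (f ∘ L) 0 := (hL0 ▸ hmax).comp_continuous hLcont.continuousAt
  have hw'cont : ContinuousAt (fun t => fderiv ℝ w (L t) e) 0 := by
    have := ((hw z hf).fderiv_right (m := 0) le_rfl).continuousAt
    rw [← hL0] at this
    exact (this.comp hLcont.continuousAt).clm_apply continuousAt_const
  rw [← hL0]
  refine hmaxL.nonpos_of_hasDerivAt_of_hasDerivAt (g' := fun t => w (L t)) ?_ ?_ hw'cont
  · filter_upwards [hnear] with t ht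
    exact ((ht.differentiableAt two_ne_zero).hasFDerivAt).comp_hasDerivAt t (hL t)
  · filter_upwards [hnear] with t ht
    exact (((hw _ ht).differentiableAt one_ne_zero).hasFDerivAt).comp_hasDerivAt t (hL t)

theorem fderiv_fderiv_apply_sub {E : Type*} [NormedAddCommGroup E] [NormedSpace ℝ E]
    {f g : E → ℝ} {x : E} (hf : ContDiffAt ℝ 2 f x) (hg : ContDiffAt ℝ 2 g x) (e : E) :
    fderiv ℝ (fun y => fderiv ℝ (fun y => f y - g y) y e) x e =
      fderiv ℝ (fun y => fderiv ℝ f y e) x e - fderiv ℝ (fun y => fderiv ℝ g y e) x e := by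
  have hdiff : ∀ {h : E → ℝ}, ContDiffAt ℝ 2 h x → DifferentiableAt ℝ (fun y => fderiv ℝ h y e) x :=
    fun hh => ((hh.fderiv_right (m := 1) le_rfl).differentiableAt one_ne_zero).clm_apply
      (differentiableAt_const e)
  have hnear : (fun y => fderiv ℝ (fun y => f y - g y) y e) =ᶠ[𝓝 x]
      fun y => fderiv ℝ f y e - fderiv ℝ g y e := by
    filter_upwards [hf.eventually (by simp), hg.eventually (by simp)] with y hfy hgy
    rw [fderiv_fun_sub (hfy.differentiableAt two_ne_zero) (hgy.differentiableAt two_ne_zero)]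
    rfl
  rw [hnear.fderiv_eq, fderiv_fun_sub (hdiff hf) (hdiff hg)]
  rfl

theorem fderiv_fderiv_apply_const_mul_norm_sub_sq {F : Type*} [NormedAddCommGroup F]
    [InnerProductSpace ℝ F] (c : ℝ) (x₀ x e : F) :
    fderiv ℝ (fun y => fderiv ℝ (fun y => c * ‖y - x₀‖ ^ 2) y e) x e = 2 * c * ‖e‖ ^ 2 := by
  have h1 : (fun y => fderiv ℝ (fun y => c * ‖y - x₀‖ ^ 2) y e) =
      fun y => 2 * c * ⟪y - x₀, e⟫ := funext fun y => by
    rw [((hasFDerivAt_sub_const (𝕜 := ℝ) x₀).norm_sq.const_mul c).fderiv]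
    simp [inner_sub_left]
    ring
  rw [h1, (((hasFDerivAt_sub_const (𝕜 := ℝ) x₀).inner ℝ (hasFDerivAt_const e x)).const_mul
    (2 * c)).fderiv]
  simp

theorem IsOpen.disjoint_frontier_connectedComponentIn {α : Type*} [TopologicalSpace α]
    [LocallyConnectedSpace α] {F : Set α} (hF : IsOpen F) (x : α) :
    Disjoint (frontier (connectedComponentIn F x)) F := by
  refine Set.disjoint_left.mpr fun z hz hzF => ?_
  obtain ⟨y, hyz, hyx⟩ := mem_closure_iff.mp (frontier_subset_closure hz) _
    hF.connectedComponentIn (mem_connectedComponentIn hzF)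
  have hzx : z ∈ connectedComponentIn F x := by
    rw [connectedComponentIn_eq hyx, ← connectedComponentIn_eq hyz]
    exact mem_connectedComponentIn hzF
  exact hF.connectedComponentIn.frontier_eq ▸ hz |>.2 hzx

section Laplacian

variable {d : ℕ}

local notation "E" => EuclideanSpace ℝ (Fin d)

theorem lap_nonpos_of_isLocalMax_s18 {f : E → ℝ} {z : E} (hmax : IsLocalMax f z)
    (hf : ContDiffAt ℝ 2 f z) : lap f z ≤ 0 :=
  Finset.sum_nonpos fun _ _ => hmax.fderiv_fderiv_apply_self_nonpos hf _

theorem lap_sub {f g : E → ℝ} {x : E} (hf : ContDiffAt ℝ 2 f x) (hg : ContDiffAt ℝ 2 g x) :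
    lap (fun y => f y - g y) x = lap f x - lap g x := by
  simp only [lap, fderiv_fderiv_apply_sub hf hg, Finset.sum_sub_distrib]

theorem lap_const_mul_norm_sub_sq (c : ℝ) (x₀ x : E) :
    lap (fun y => c * ‖y - x₀‖ ^ 2) x = 2 * c * d := by
  simp [lap, fderiv_fderiv_apply_const_mul_norm_sub_sq, mul_comm]

theorem exists_mem_frontier_isMaxOn_closure_of_lap_pos {U : Set E} (hU : IsOpen U)
    (hbdd : Bornology.IsBounded U) (hne : U.Nonempty) {v : E → ℝ} (hv : ContDiffOn ℝ 2 v U)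
    (hcont : ContinuousOn v (closure U)) (hlap : ∀ x ∈ U, 0 < lap v x) :
    ∃ z ∈ frontier U, IsMaxOn v (closure U) z := by
  obtain ⟨z, hzU, hmax⟩ := hbdd.isCompact_closure.exists_isMaxOn hne.closure hcont
  refine ⟨z, hU.frontier_eq ▸ ⟨hzU, fun hz => ?_⟩, hmax⟩
  have hloc : IsLocalMax v z := (hmax.on_subset subset_closure).isLocalMax (hU.mem_nhds hz)
  exact (hlap z hz).not_ge (lap_nonpos_of_isLocalMax_s18 hloc (hv.contDiffAt (hU.mem_nhds hz)))

end Laplacian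

theorem exists_mem_sphere_add_mul_sq_le_of_lap_eq_one {d : ℕ}
    {Ω : Set (EuclideanSpace ℝ (Fin d))} (hΩ : IsOpen Ω) {u : EuclideanSpace ℝ (Fin d) → ℝ}
    (hu : ContDiffOn ℝ 2 u Ω) (hnn : ∀ x ∈ Ω, 0 ≤ u x) (hlap : ∀ x ∈ Ω, 0 < u x → lap u x = 1)
    {x₀ : EuclideanSpace ℝ (Fin d)} (hpos : 0 < u x₀) {ρ : ℝ} (hρ : 0 < ρ)
    (hball : closedBall x₀ ρ ⊆ Ω) {c : ℝ} (hc : 0 ≤ c) (hcd : 2 * c * d < 1) :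
    ∃ z ∈ sphere x₀ ρ, u x₀ + c * ρ ^ 2 ≤ u z := by
  set v := fun y => u y - c * ‖y - x₀‖ ^ 2
  set W := ball x₀ ρ ∩ (Ω ∩ u ⁻¹' Ioi 0)
  have hW : IsOpen W := isOpen_ball.inter (hu.continuousOn.isOpen_inter_preimage hΩ isOpen_Ioi)
  set U := connectedComponentIn W x₀
  have hUW : U ⊆ W := connectedComponentIn_subset W x₀
  have hx₀U : x₀ ∈ U :=
    mem_connectedComponentIn ⟨mem_ball_self hρ, hball (mem_closedBall_self hρ.le), hpos⟩
  have hUball : closure U ⊆ closedBall x₀ ρ :=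
    (closure_mono (hUW.trans inter_subset_left)).trans closure_ball_subset_closedBall
  have hq : ContDiff ℝ 2 fun y => c * ‖y - x₀‖ ^ 2 :=
    contDiff_const.mul ((contDiff_id.sub contDiff_const).norm_sq ℝ)
  have hv : ContDiffOn ℝ 2 v Ω := hu.sub hq.contDiffOn
  have hlapv : ∀ x ∈ U, 0 < lap v x := fun x hx => by
    obtain ⟨-, hxΩ, hux⟩ := hUW hx
    rw [lap_sub (hu.contDiffAt (hΩ.mem_nhds hxΩ)) hq.contDiffAt, hlap x hxΩ hux,
      lap_const_mul_norm_sub_sq]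
    linarith
  obtain ⟨z, hzU, hzmax⟩ := exists_mem_frontier_isMaxOn_closure_of_lap_pos hW.connectedComponentIn
    (isBounded_ball.subset (hUW.trans inter_subset_left)) ⟨x₀, hx₀U⟩
    (hv.mono (hUW.trans fun x hx => hx.2.1)) (hv.continuousOn.mono (hUball.trans hball)) hlapv
  have hzW : z ∉ W := disjoint_left.mp (hW.disjoint_frontier_connectedComponentIn x₀) hzU
  have hzball : z ∈ closedBall x₀ ρ := hUball (frontier_subset_closure hzU)
  have hx₀z : u x₀ ≤ v z := by simpa [v] using hzmax (subset_closure hx₀U)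
  have hzsphere : z ∈ sphere x₀ ρ := by
    refine (mem_closedBall.mp hzball).eq_or_lt.resolve_right fun hlt => ?_
    have huz : u z = 0 :=
      le_antisymm (not_lt.mp fun h => hzW ⟨hlt, hball hzball, h⟩) (hnn z (hball hzball))
    have hvz : v z ≤ 0 := by simp only [v, huz]; nlinarith [sq_nonneg ‖z - x₀‖]
    linarith
  refine ⟨z, hzsphere, ?_⟩
  have hvz : v z = u z - c * ρ ^ 2 := by simp [v, ← dist_eq_norm, mem_sphere.mp hzsphere]
  linarith

theorem stmt18_general (d : ℕ) (Ω : Set (EuclideanSpace ℝ (Fin d))) (hΩ : IsOpen Ω)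
    (u : EuclideanSpace ℝ (Fin d) → ℝ) (hu : ContDiffOn ℝ 2 u Ω)
    (hnn : ∀ x ∈ Ω, 0 ≤ u x)
    (hlap : ∀ x ∈ Ω, 0 < u x → lap u x = 1)
    (x₀ : EuclideanSpace ℝ (Fin d)) (hpos : 0 < u x₀)
    (ρ : ℝ) (hρ : 0 < ρ) (hball : closedBall x₀ ρ ⊆ Ω) :
    u x₀ + ρ^2 / (4 * d) ≤ sSup (u '' sphere x₀ ρ) := by
  have hcd : 2 * (1 / (4 * d)) * d ≤ (1 / 2 : ℝ) := by
    rcases eq_or_ne (d : ℝ) 0 with hd | hd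
    · simp [hd]
    · field_simp
      norm_num
  obtain ⟨z, hz, hle⟩ := exists_mem_sphere_add_mul_sq_le_of_lap_eq_one hΩ hu hnn hlap hpos hρ
    hball (c := 1 / (4 * d)) (by positivity) (by linarith)
  have hbdd : BddAbove (u '' sphere x₀ ρ) := ((isCompact_sphere x₀ ρ).image_of_continuousOn
    (hu.continuousOn.mono (sphere_subset_closedBall.trans hball))).bddAbove
  calc u x₀ + ρ ^ 2 / (4 * d) = u x₀ + 1 / (4 * d) * ρ ^ 2 := by ring
    _ ≤ u z := hle
    _ ≤ sSup (u '' sphere x₀ ρ) := le_csSup hbdd (mem_image_of_mem u hz)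

/-- Non-degeneracy for the obstacle problem: at a point `x₀` with `u(x₀) > 0`, the
supremum of `u` over `∂B_ρ(x₀)` exceeds `u(x₀) + ρ²/(4d)`. -/
theorem stmt18 (d : ℕ) (hd : 0 < d) (Ω : Set (EuclideanSpace ℝ (Fin d))) (hΩ : IsOpen Ω)
    (u : EuclideanSpace ℝ (Fin d) → ℝ) (hu : ContDiffOn ℝ 2 u Ω)
    (hnn : ∀ x ∈ Ω, 0 ≤ u x)
    (hlap : ∀ x ∈ Ω, 0 < u x → lap u x = 1)
    (x₀ : EuclideanSpace ℝ (Fin d)) (hx₀ : x₀ ∈ Ω) (hpos : 0 < u x₀)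
    (ρ : ℝ) (hρ : 0 < ρ) (hball : closedBall x₀ ρ ⊆ Ω) :
    u x₀ + ρ^2 / (4 * d) ≤ sSup (u '' sphere x₀ ρ) :=
  stmt18_general d Ω hΩ u hu hnn hlap x₀ hpos ρ hρ hball
end
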